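/- arXiv:2110.03294 — 2 statements merged into one kernel-verified Lean document; each statement's English description precedes it below -/
import Mathlib

section
/- Let $r : \mathbb{R}^d \to \mathbb{R}$ be convex, $f : \mathbb{R}^d \to \mathbb{R}$ be $L$-smooth, $\gamma > 0$, $v \in \mathbb{R}^d$, $x \in \mathbb{R}^d$, and let $x^+ = \mathrm{prox}_{\gamma r}(x - \gamma v)$ where $\mathrm{prox}_{\gamma r}(y) = \arg\min_{u}\{r(u) + \frac{1}{2\gamma}\|u - y\|^2\}$. Then for any $\lambda > 0$, with $\Phi = f + r$: $\Phi(x^+) \leq \Phi(x) + \frac{1}{2\lambda}\|v - \nabla f(x)\|^2 - \left(\frac{1}{\gamma} - \frac{L}{2} - \frac{\lambda}{2}\right)\|x^+ - x\|^2$. -/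
/-!
The descent lemma bounds `f xp` by the linearization of `f` at `x` plus `L / 2 * ‖xp - x‖ ^ 2`.
Optimality of `xp` for the prox subproblem, together with convexity of `r`, makes
`γ⁻¹ • (x - γ • v - xp)` a subgradient of `r` at `xp`, so
`r xp ≤ r x - γ⁻¹ * ‖xp - x‖ ^ 2 - ⟪v, xp - x⟫`. Adding the two bounds leaves the error term
`⟪∇f x - v, xp - x⟫`, which Young's inequality with weight `lam` splits into the two stated terms.
-/

open Filter Set Topology
open scoped InnerProductSpace

lemma nonneg_of_forall_nonneg_add_mul {A B : ℝ} (h : ∀ t, 0 < t → t ≤ 1 → 0 ≤ A + t * B) :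
    0 ≤ A := by
  have hlim : Tendsto (fun t : ℝ => A + t * B) (𝓝[>] 0) (𝓝 A) :=
    (Continuous.tendsto' (by fun_prop) 0 A (by simp)).mono_left nhdsWithin_le_nhds
  exact ge_of_tendsto hlim <| by
    filter_upwards [Ioo_mem_nhdsGT one_pos] with t ht using h t ht.1 ht.2.le

section

variable {E : Type*} [NormedAddCommGroup E] [InnerProductSpace ℝ E]

lemma real_inner_le_sq_div_add_mul_sq (a b : E) {ε : ℝ} (hε : 0 < ε) :
    ⟪a, b⟫_ℝ ≤ 1 / (2 * ε) * ‖a‖ ^ 2 + ε / 2 * ‖b‖ ^ 2 := by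
  have h : 0 ≤ ‖a - ε • b‖ ^ 2 / (2 * ε) := by positivity
  rw [norm_sub_sq_real, real_inner_smul_right, norm_smul, Real.norm_of_nonneg hε.le] at h
  rw [← sub_nonneg]
  convert h using 1
  field_simp
  ring

lemma ConvexOn.add_inner_le_of_isMinOn_add_sq {r : E → ℝ} (hr : ConvexOn ℝ univ r) {γ : ℝ}
    {y p : E} (hp : IsMinOn (fun u => r u + 1 / (2 * γ) * ‖u - y‖ ^ 2) univ p) (u : E) :
    r p + γ⁻¹ * ⟪y - p, u - p⟫_ℝ ≤ r u := by
  suffices 0 ≤ r u - r p - γ⁻¹ * ⟪y - p, u - p⟫_ℝ by linarith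
  -- compare `p` with the points of the segment `[p, u]` and let them tend to `p`
  refine nonneg_of_forall_nonneg_add_mul (B := 1 / (2 * γ) * ‖u - p‖ ^ 2) fun t ht0 ht1 => ?_
  have hconv : r ((1 - t) • p + t • u) ≤ (1 - t) * r p + t * r u :=
    hr.2 (mem_univ p) (mem_univ u) (by linarith) ht0.le (by ring)
  have hmin := isMinOn_univ_iff.1 hp ((1 - t) • p + t • u)
  have hsq : ‖(1 - t) • p + t • u - y‖ ^ 2
      = ‖p - y‖ ^ 2 - 2 * t * ⟪y - p, u - p⟫_ℝ + t ^ 2 * ‖u - p‖ ^ 2 := by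
    rw [show (1 - t) • p + t • u - y = (p - y) + t • (u - p) by module, norm_add_sq_real,
      real_inner_smul_right, norm_smul, Real.norm_of_nonneg ht0.le, ← neg_sub y p,
      inner_neg_left]
    ring
  rw [hsq] at hmin
  refine nonneg_of_mul_nonneg_right ?_ ht0
  rw [show γ⁻¹ = 2 * (1 / (2 * γ)) by ring]
  nlinarith [hmin, hconv]

end

section

variable {E : Type*} [NormedAddCommGroup E] [InnerProductSpace ℝ E] [CompleteSpace E]

lemma HasGradientAt.hasDerivAt_comp_add_smul {f : E → ℝ} {g x w : E} {t : ℝ}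
    (hf : HasGradientAt f g (x + t • w)) :
    HasDerivAt (fun s : ℝ => f (x + s • w)) ⟪g, w⟫_ℝ t := by
  have hline : HasDerivAt (fun s : ℝ => x + s • w) w t := by
    simpa using ((hasDerivAt_id t).smul_const w).const_add x
  have := hf.hasFDerivAt.comp_hasDerivAt t hline
  simp only [InnerProductSpace.toDual_apply_apply] at this
  exact this

lemma apply_le_add_inner_add_sq_of_lipschitz_gradient {f : E → ℝ} {f' : E → E} {L : ℝ}
    (hgrad : ∀ x, HasGradientAt f (f' x) x) (hlip : ∀ x y, ‖f' x - f' y‖ ≤ L * ‖x - y‖)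
    (x y : E) : f y ≤ f x + ⟪f' x, y - x⟫_ℝ + L / 2 * ‖y - x‖ ^ 2 := by
  set w := y - x
  set φ : ℝ → ℝ := fun t => f (x + t • w) - t * ⟪f' x, w⟫_ℝ - L / 2 * t ^ 2 * ‖w‖ ^ 2
  have hφ : ∀ t, HasDerivAt φ (⟪f' (x + t • w) - f' x, w⟫_ℝ - L * t * ‖w‖ ^ 2) t := by
    intro t
    refine ((((hgrad (x + t • w)).hasDerivAt_comp_add_smul).sub
      ((hasDerivAt_id t).mul_const ⟪f' x, w⟫_ℝ)).sub
      (((hasDerivAt_pow 2 t).const_mul (L / 2)).mul_const (‖w‖ ^ 2))).congr_deriv ?_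
    rw [inner_sub_left]
    ring
  have hanti : AntitoneOn φ (Ici 0) := by
    refine antitoneOn_of_hasDerivWithinAt_nonpos (convex_Ici 0)
      (HasDerivAt.continuousOn fun t _ => hφ t) (fun t _ => (hφ t).hasDerivWithinAt) ?_
    intro t ht
    have ht : 0 < t := by simpa using ht
    have hdist : ‖f' (x + t • w) - f' x‖ ≤ L * (t * ‖w‖) := by
      simpa [norm_smul, abs_of_pos ht] using hlip (x + t • w) x
    nlinarith [real_inner_le_norm (f' (x + t • w) - f' x) w, norm_nonneg w]
  have := hanti self_mem_Ici (zero_le_one' ℝ) zero_le_one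
  norm_num [φ, w] at this
  linarith

end

theorem stmt_7 (d : ℕ) (r f : EuclideanSpace ℝ (Fin d) → ℝ)
    (hr : ConvexOn ℝ Set.univ r)
    (f' : EuclideanSpace ℝ (Fin d) → EuclideanSpace ℝ (Fin d))
    (L : ℝ) (hgrad : ∀ x, HasGradientAt f (f' x) x)
    (hlip : ∀ x y, ‖f' x - f' y‖ ≤ L * ‖x - y‖)
    (γ : ℝ) (hγ : 0 < γ) (v x xp : EuclideanSpace ℝ (Fin d))
    (hprox : ∀ u : EuclideanSpace ℝ (Fin d),
      r xp + (1 / (2 * γ)) * ‖xp - (x - γ • v)‖ ^ 2 ≤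
        r u + (1 / (2 * γ)) * ‖u - (x - γ • v)‖ ^ 2)
    (lam : ℝ) (hlam : 0 < lam) :
    f xp + r xp ≤ f x + r x + (1 / (2 * lam)) * ‖v - f' x‖ ^ 2
      - (1 / γ - L / 2 - lam / 2) * ‖xp - x‖ ^ 2 := by
  have hdescent := apply_le_add_inner_add_sq_of_lipschitz_gradient hgrad hlip x xp
  have hsubgrad := hr.add_inner_le_of_isMinOn_add_sq (isMinOn_univ_iff.2 hprox) x
  have hyoung := real_inner_le_sq_div_add_mul_sq (f' x - v) (xp - x) hlam
  have hprox_inner : γ⁻¹ * ⟪x - γ • v - xp, x - xp⟫_ℝ = 1 / γ * ‖xp - x‖ ^ 2 + ⟪v, xp - x⟫_ℝ := by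
    rw [sub_right_comm, inner_sub_left, real_inner_smul_left, real_inner_self_eq_norm_sq,
      norm_sub_rev, ← neg_sub xp x, inner_neg_right]
    field_simp
    ring
  rw [norm_sub_rev, inner_sub_left] at hyoung
  linarith
end

section
/- Let $\theta \in (0,1]$, $\mu > 0$, and $\gamma \leq \frac{\theta}{2\mu}$, $\gamma > 0$. Suppose nonnegative sequences $\{\delta^t\}$, $\{G^t\}$, $\{R^t\}$ satisfy, for all $t$: $\delta^{t+1} \leq (1-\gamma\mu)\delta^t - (\frac{1}{2\gamma} - \frac{L}{2})R^t + \frac{\gamma}{2}G^t$ and $G^{t+1} \leq (1-\theta)G^t + \beta\tilde{L}^2 R^t$, where $L, \beta, \tilde{L} \geq 0$ and $\gamma$ additionally satisfies $\frac{2\beta\tilde{L}^2\gamma^2}{\theta} + L\gamma \leq 1$. Then the Lyapunov sequence $\Psi^t = \delta^t + \frac{\gamma}{\theta}G^t$ satisfies $\Psi^T \leq (1-\gamma\mu)^T \Psi^0$ for all $T \geq 0$. -/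
/-!
The weighted sum `Ψ t = δ t + (γ / θ) * G t` contracts by the factor `1 - γ * μ` at every step:
adding `γ / θ` times the recursion for `G` to the one for `δ`, the step-size condition makes the
coefficient of `R t` nonpositive, and `γ * μ ≤ θ / 2` lets the leftover `γ / θ - γ / 2` multiplying
`G t` be absorbed into `(1 - γ * μ) * (γ / θ)`. Iterating the contraction gives the geometric bound.
-/

theorem add_mul_le_mul_add_mul_of_coupled {a a' g g' r ρ σ b c d w : ℝ}
    (hg : 0 ≤ g) (hr : 0 ≤ r) (hw : 0 ≤ w)
    (ha' : a' ≤ ρ * a - c * r + b * g) (hg' : g' ≤ σ * g + d * r)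
    (hd : w * d ≤ c) (hb : b + w * σ ≤ ρ * w) :
    a' + w * g' ≤ ρ * (a + w * g) :=
  calc a' + w * g' ≤ (ρ * a - c * r + b * g) + w * (σ * g + d * r) :=
        add_le_add ha' (mul_le_mul_of_nonneg_left hg' hw)
    _ = ρ * a + (b + w * σ) * g + (w * d - c) * r := by ring
    _ ≤ ρ * a + (ρ * w) * g + 0 * r := by
        gcongr
        linarith
    _ = ρ * (a + w * g) := by ring

theorem div_mul_le_of_two_mul_sq_div_add_le_one {θ γ L K : ℝ} (hθ : 0 < θ) (hγ : 0 < γ)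
    (hstep : 2 * K * γ ^ 2 / θ + L * γ ≤ 1) :
    γ / θ * K ≤ 1 / (2 * γ) - L / 2 := by
  rw [le_sub_iff_add_le, le_div_iff₀ (by positivity)]
  calc (γ / θ * K + L / 2) * (2 * γ) = 2 * K * γ ^ 2 / θ + L * γ := by field_simp
    _ ≤ 1 := hstep

theorem half_add_div_mul_one_sub_le {θ γ μ : ℝ} (hθ : 0 < θ) (hγ : 0 ≤ γ)
    (hγμ : γ * μ ≤ θ / 2) :
    γ / 2 + γ / θ * (1 - θ) ≤ (1 - γ * μ) * (γ / θ) := by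
  have h_absorb : γ * μ * (γ / θ) ≤ γ / 2 := by
    calc γ * μ * (γ / θ) ≤ θ / 2 * (γ / θ) := by gcongr
      _ = γ / 2 := by field_simp
  calc γ / 2 + γ / θ * (1 - θ) = γ / θ - γ / 2 := by field_simp; ring
    _ ≤ γ / θ - γ * μ * (γ / θ) := by linarith
    _ = (1 - γ * μ) * (γ / θ) := by ring

theorem stmt_15_general (θ μ γ L β Ltil : ℝ) (hθ0 : 0 < θ) (hθ1 : θ ≤ 1) (hμ : 0 < μ)
    (hγ0 : 0 < γ) (hγ : γ ≤ θ / (2 * μ))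
    (hstep : 2 * β * Ltil ^ 2 * γ ^ 2 / θ + L * γ ≤ 1)
    (δ G R : ℕ → ℝ) (hG : ∀ t, 0 ≤ G t) (hR : ∀ t, 0 ≤ R t)
    (hrec1 : ∀ t, δ (t + 1) ≤ (1 - γ * μ) * δ t - (1 / (2 * γ) - L / 2) * R t
      + (γ / 2) * G t)
    (hrec2 : ∀ t, G (t + 1) ≤ (1 - θ) * G t + β * Ltil ^ 2 * R t) :
    ∀ T : ℕ, δ T + (γ / θ) * G T ≤ (1 - γ * μ) ^ T * (δ 0 + (γ / θ) * G 0) := by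
  have hγμ : γ * μ ≤ θ / 2 := by
    have := (le_div_iff₀ (by positivity)).1 hγ
    linarith
  have hR_coeff : γ / θ * (β * Ltil ^ 2) ≤ 1 / (2 * γ) - L / 2 :=
    div_mul_le_of_two_mul_sq_div_add_le_one hθ0 hγ0 (by rwa [← mul_assoc])
  intro T
  refine le_geom (u := fun t ↦ δ t + γ / θ * G t) (by linarith) T fun t _ ↦ ?_
  exact add_mul_le_mul_add_mul_of_coupled (hG t) (hR t) (by positivity) (hrec1 t) (hrec2 t)
    hR_coeff (half_add_div_mul_one_sub_le hθ0 hγ0.le hγμ)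

theorem stmt_15 (θ μ γ L β Ltil : ℝ) (hθ0 : 0 < θ) (hθ1 : θ ≤ 1) (hμ : 0 < μ)
    (hγ0 : 0 < γ) (hγ : γ ≤ θ / (2 * μ))
    (hL : 0 ≤ L) (hβ : 0 ≤ β) (hLtil : 0 ≤ Ltil)
    (hstep : 2 * β * Ltil ^ 2 * γ ^ 2 / θ + L * γ ≤ 1)
    (δ G R : ℕ → ℝ) (hδ : ∀ t, 0 ≤ δ t) (hG : ∀ t, 0 ≤ G t) (hR : ∀ t, 0 ≤ R t)
    (hrec1 : ∀ t, δ (t + 1) ≤ (1 - γ * μ) * δ t - (1 / (2 * γ) - L / 2) * R t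
      + (γ / 2) * G t)
    (hrec2 : ∀ t, G (t + 1) ≤ (1 - θ) * G t + β * Ltil ^ 2 * R t) :
    ∀ T : ℕ, δ T + (γ / θ) * G T ≤ (1 - γ * μ) ^ T * (δ 0 + (γ / θ) * G 0) :=
  stmt_15_general θ μ γ L β Ltil hθ0 hθ1 hμ hγ0 hγ hstep δ G R hG hR hrec1 hrec2
end
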